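/- arXiv:1712.07617 — 3 statements merged into one kernel-verified Lean document; each statement's English description precedes it below -/
import Mathlib

section
/- Let ν̃ ∈ (−1/2, 1) and Δv > 0. Let f : ℤ³ → [0,∞) be such that ρ := Σ_{j∈ℤ³} f_j Δv³ satisfies 0 < ρ < ∞ and Σ_j f_j |v_j|² Δv³ < ∞, where v_j = jΔv ∈ ℝ³. Define U = (1/ρ)Σ_j f_j v_j Δv³, T = (1/(3ρ))Σ_j f_j |v_j − U|² Δv³, Θ = (1/ρ)Σ_j f_j (v_j − U)⊗(v_j − U) Δv³, and 𝒯_{ν̃} = (1−ν̃)T·Id + ν̃Θ. Then min{1−ν̃, 1+2ν̃}³·T³ ≤ det 𝒯_{ν̃} ≤ max{1−ν̃, 1+2ν̃}³·T³. -/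
noncomputable section

open Real MeasureTheory

/-- Velocity space `ℝ³`. -/
abbrev V3 := Fin 3 → ℝ

/-- Velocity grid index set `ℤ³`. -/
abbrev Idx3 := Fin 3 → ℤ

/-- Euclidean norm on `V3`. -/
def enorm3 (v : V3) : ℝ := Real.sqrt (∑ a, v a ^ 2)

/-- The velocity grid node `v_j = jΔv`. -/
def gridV (Δv : ℝ) (j : Idx3) : V3 := fun a => (j a : ℝ) * Δv

/-- Quadratic form `kᵀ A k` of a 3×3 matrix. -/
def quadForm (A : Matrix (Fin 3) (Fin 3) ℝ) (k : V3) : ℝ := ∑ a, ∑ b, k a * A a b * k b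

/-- The ellipsoidal Gaussian with density `ρ`, bulk velocity `U` and temperature tensor `T`. -/
def gaussianM (ρ : ℝ) (U : V3) (T : Matrix (Fin 3) (Fin 3) ℝ) (v : V3) : ℝ :=
  ρ / Real.sqrt ((2 * π) ^ 3 * T.det) *
    Real.exp (-(1 / 2) * quadForm T⁻¹ (fun a => v a - U a))

/-- Discrete density. -/
def dRho (Δv : ℝ) (h : Idx3 → ℝ) : ℝ := ∑' j : Idx3, h j * Δv ^ 3

/-- Discrete bulk velocity. -/
def dU (Δv : ℝ) (h : Idx3 → ℝ) : V3 :=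
  fun a => (dRho Δv h)⁻¹ * ∑' j : Idx3, h j * gridV Δv j a * Δv ^ 3

/-- Discrete temperature. -/
def dT (Δv : ℝ) (h : Idx3 → ℝ) : ℝ :=
  (3 * dRho Δv h)⁻¹ * ∑' j : Idx3, h j * enorm3 (fun a => gridV Δv j a - dU Δv h a) ^ 2 * Δv ^ 3

/-- Discrete stress tensor. -/
def dTheta (Δv : ℝ) (h : Idx3 → ℝ) : Matrix (Fin 3) (Fin 3) ℝ :=
  Matrix.of fun a b =>
    (dRho Δv h)⁻¹ *
      ∑' j : Idx3, h j * (gridV Δv j a - dU Δv h a) * (gridV Δv j b - dU Δv h b) * Δv ^ 3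

/-- The temperature tensor `(1−ν)T·Id + νΘ`. -/
def tensorOf (ν T : ℝ) (Θ : Matrix (Fin 3) (Fin 3) ℝ) : Matrix (Fin 3) (Fin 3) ℝ :=
  ((1 - ν) * T) • (1 : Matrix (Fin 3) (Fin 3) ℝ) + ν • Θ

/-- Continuous density. -/
def cRho (F : V3 → ℝ) : ℝ := ∫ v : V3, F v

/-- Continuous bulk velocity. -/
def cU (F : V3 → ℝ) : V3 := fun a => (cRho F)⁻¹ * ∫ v : V3, F v * v a

/-- Continuous temperature. -/
def cT (F : V3 → ℝ) : ℝ :=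
  (3 * cRho F)⁻¹ * ∫ v : V3, F v * enorm3 (fun a => v a - cU F a) ^ 2

/-- Continuous stress tensor. -/
def cTheta (F : V3 → ℝ) : Matrix (Fin 3) (Fin 3) ℝ :=
  Matrix.of fun a b => (cRho F)⁻¹ * ∫ v : V3, F v * (v a - cU F a) * (v b - cU F b)

/-- Collision frequency `A_ν = (1−ν)⁻¹`. -/
def Anu (ν : ℝ) : ℝ := (1 - ν)⁻¹

/-- The modified relaxation parameter `nt = κν/(κ+Δt)`. -/
def nuTilde (κ ν Δt : ℝ) : ℝ := κ * ν / (κ + Δt)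

/-- `s(i,j)`: the unique integer with `sΔx ≤ iΔx − Δt v_{j,1} < (s+1)Δx`. -/
def sIdx (Δx Δt Δv : ℝ) (i : ℤ) (j : Idx3) : ℤ :=
  ⌊((i : ℝ) * Δx - Δt * ((j 0 : ℝ) * Δv)) / Δx⌋

/-- Linear reconstruction of a grid function at the foot of the characteristic. -/
def recon (Δx Δt Δv : ℝ) (g : ℤ → Idx3 → ℝ) (i : ℤ) (j : Idx3) : ℝ :=
  (((i : ℝ) * Δx - Δt * ((j 0 : ℝ) * Δv) - (sIdx Δx Δt Δv i j : ℝ) * Δx) / Δx) *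
      g (sIdx Δx Δt Δv i j + 1) j
    + ((((sIdx Δx Δt Δv i j : ℝ) + 1) * Δx - ((i : ℝ) * Δx - Δt * ((j 0 : ℝ) * Δv))) / Δx) *
      g (sIdx Δx Δt Δv i j) j

/-- Discrete ellipsoidal Gaussian built from a velocity grid function `h`. -/
def gaussD (nt Δv : ℝ) (h : Idx3 → ℝ) (j : Idx3) : ℝ :=
  gaussianM (dRho Δv h) (dU Δv h) (tensorOf nt (dT Δv h) (dTheta Δv h)) (gridV Δv j)

/-- The shifted initial datum `v ↦ f₀(x_i − Δt v₁, v)`. -/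
def shift0 (f₀ : ℝ → V3 → ℝ) (Δx Δt : ℝ) (i : ℤ) : V3 → ℝ :=
  fun v => f₀ ((i : ℝ) * Δx - Δt * v 0) v

/-- Step-0 ellipsoidal Gaussian, built from the continuous macroscopic fields of `f̃⁰`. -/
def gauss0 (f₀ : ℝ → V3 → ℝ) (κ ν Δx Δt Δv : ℝ) (i : ℤ) (j : Idx3) : ℝ :=
  gaussianM (cRho (shift0 f₀ Δx Δt i)) (cU (shift0 f₀ Δx Δt i))
    (tensorOf (nuTilde κ ν Δt) (cT (shift0 f₀ Δx Δt i)) (cTheta (shift0 f₀ Δx Δt i)))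
    (gridV Δv j)

/-- `f̃⁰_{i,j} = f₀(x_i − Δt v_{j,1}, v_j)`. -/
def tilde0 (f₀ : ℝ → V3 → ℝ) (Δx Δt Δv : ℝ) (i : ℤ) (j : Idx3) : ℝ :=
  f₀ ((i : ℝ) * Δx - Δt * ((j 0 : ℝ) * Δv)) (gridV Δv j)

/-- The semi-Lagrangian scheme iterates `fⁿ_{i,j}`. -/
def schemeF (f₀ : ℝ → V3 → ℝ) (κ ν Δx Δt Δv : ℝ) : ℕ → ℤ → Idx3 → ℝ
  | 0 => fun i j => f₀ ((i : ℝ) * Δx) (gridV Δv j)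
  | 1 => fun i j =>
      (κ / (κ + Anu ν * Δt)) * tilde0 f₀ Δx Δt Δv i j
        + (Anu ν * Δt / (κ + Anu ν * Δt)) * gauss0 f₀ κ ν Δx Δt Δv i j
  | (n + 2) => fun i j =>
      (κ / (κ + Anu ν * Δt)) * recon Δx Δt Δv (schemeF f₀ κ ν Δx Δt Δv (n + 1)) i j
        + (Anu ν * Δt / (κ + Anu ν * Δt)) *
            gaussD (nuTilde κ ν Δt) Δv (recon Δx Δt Δv (schemeF f₀ κ ν Δx Δt Δv (n + 1)) i) j

/-- The reconstructed scheme iterates `f̃ⁿ_{i,j}`. -/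
def schemeTilde (f₀ : ℝ → V3 → ℝ) (κ ν Δx Δt Δv : ℝ) : ℕ → ℤ → Idx3 → ℝ
  | 0 => tilde0 f₀ Δx Δt Δv
  | (n + 1) => recon Δx Δt Δv (schemeF f₀ κ ν Δx Δt Δv (n + 1))

/-- The ellipsoidal Gaussian used in the `n → n+1` update of the scheme. -/
def schemeGauss (f₀ : ℝ → V3 → ℝ) (κ ν Δx Δt Δv : ℝ) : ℕ → ℤ → Idx3 → ℝ
  | 0 => gauss0 f₀ κ ν Δx Δt Δv
  | (n + 1) => fun i j =>
      gaussD (nuTilde κ ν Δt) Δv (schemeTilde f₀ κ ν Δx Δt Δv (n + 1) i) j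

/-- Discrete density of `f̃ⁿ` at spatial node `i` (continuous fields at step 0). -/
def schemeRho (f₀ : ℝ → V3 → ℝ) (κ ν Δx Δt Δv : ℝ) : ℕ → ℤ → ℝ
  | 0 => fun i => cRho (shift0 f₀ Δx Δt i)
  | (n + 1) => fun i => dRho Δv (schemeTilde f₀ κ ν Δx Δt Δv (n + 1) i)

/-- Discrete bulk velocity of `f̃ⁿ` at spatial node `i` (continuous fields at step 0). -/
def schemeU (f₀ : ℝ → V3 → ℝ) (κ ν Δx Δt Δv : ℝ) : ℕ → ℤ → V3
  | 0 => fun i => cU (shift0 f₀ Δx Δt i)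
  | (n + 1) => fun i => dU Δv (schemeTilde f₀ κ ν Δx Δt Δv (n + 1) i)

/-- Discrete temperature of `f̃ⁿ` at spatial node `i` (continuous fields at step 0). -/
def schemeTemp (f₀ : ℝ → V3 → ℝ) (κ ν Δx Δt Δv : ℝ) : ℕ → ℤ → ℝ
  | 0 => fun i => cT (shift0 f₀ Δx Δt i)
  | (n + 1) => fun i => dT Δv (schemeTilde f₀ κ ν Δx Δt Δv (n + 1) i)

/-- Weighted `L∞_q` norm of the initial datum. -/
def normLq (q : ℝ) (f₀ : ℝ → V3 → ℝ) : ℝ :=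
  ⨆ x : ℝ, ⨆ v : V3, |f₀ x v| * (1 + enorm3 v) ^ q

/-! With `μⱼ = fⱼ Δv³` and `wⱼ = vⱼ - U`, the stress tensor is `Θ = ρ⁻¹ ∑ⱼ μⱼ wⱼ ⊗ wⱼ`, whose
quadratic form `ρ⁻¹ ∑ⱼ μⱼ (wⱼ · x)²` lies between `0` and, by Cauchy–Schwarz,
`ρ⁻¹ ∑ⱼ μⱼ |wⱼ|² |x|² = 3T |x|²`. The quadratic form of `(1-ν)T Id + νΘ` is affine in that of
`Θ`, so it lies between `min (1-ν) (1+2ν) T |x|²` and `max (1-ν) (1+2ν) T |x|²`; hence so do the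
three eigenvalues of this symmetric matrix, and its determinant is their product. -/

open Matrix

namespace Matrix.IsHermitian

variable {n : Type*} [Fintype n] [DecidableEq n] {M : Matrix n n ℝ}

lemma exists_unit_dotProduct_mulVec_eq_eigenvalues (hM : M.IsHermitian) (i : n) :
    ∃ v : n → ℝ, v ⬝ᵥ v = 1 ∧ hM.eigenvalues i = v ⬝ᵥ M *ᵥ v := by
  refine ⟨hM.eigenvectorBasis i, ?_, by simpa using hM.eigenvalues_eq i⟩
  have hunit : ‖hM.eigenvectorBasis i‖ = 1 := hM.eigenvectorBasis.orthonormal.1 i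
  have := real_inner_self_eq_norm_sq (hM.eigenvectorBasis i)
  rw [EuclideanSpace.inner_eq_star_dotProduct, hunit] at this
  simpa using this

lemma le_eigenvalues (hM : M.IsHermitian) {m : ℝ}
    (h : ∀ x, m * (x ⬝ᵥ x) ≤ x ⬝ᵥ M *ᵥ x) (i : n) : m ≤ hM.eigenvalues i := by
  obtain ⟨v, hv, hi⟩ := hM.exists_unit_dotProduct_mulVec_eq_eigenvalues i
  simpa [hv, ← hi] using h v

lemma eigenvalues_le (hM : M.IsHermitian) {m : ℝ}
    (h : ∀ x, x ⬝ᵥ M *ᵥ x ≤ m * (x ⬝ᵥ x)) (i : n) : hM.eigenvalues i ≤ m := by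
  obtain ⟨v, hv, hi⟩ := hM.exists_unit_dotProduct_mulVec_eq_eigenvalues i
  simpa [hv, ← hi] using h v

lemma pow_card_le_det (hM : M.IsHermitian) {m : ℝ} (hm : 0 ≤ m)
    (h : ∀ x, m * (x ⬝ᵥ x) ≤ x ⬝ᵥ M *ᵥ x) : m ^ Fintype.card n ≤ M.det := by
  rw [hM.det_eq_prod_eigenvalues, ← Finset.card_univ, ← Finset.prod_const]
  exact Finset.prod_le_prod (fun _ _ => hm) fun i _ => by simpa using hM.le_eigenvalues h i

lemma det_le_pow_card (hM : M.IsHermitian) {m : ℝ} (hpos : ∀ x, 0 ≤ x ⬝ᵥ M *ᵥ x)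
    (h : ∀ x, x ⬝ᵥ M *ᵥ x ≤ m * (x ⬝ᵥ x)) : M.det ≤ m ^ Fintype.card n := by
  rw [hM.det_eq_prod_eigenvalues, ← Finset.card_univ, ← Finset.prod_const]
  refine Finset.prod_le_prod (fun i _ => ?_) fun i _ => by simpa using hM.eigenvalues_le h i
  simpa using hM.le_eigenvalues (m := 0) (by simpa using hpos) i

end Matrix.IsHermitian

section SecondMoment

variable {ι n : Type*}

def secondMoment (μ : ι → ℝ) (w : ι → n → ℝ) : Matrix n n ℝ :=
  Matrix.of fun a b => ∑' j, μ j * w j a * w j b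

lemma secondMoment_isHermitian (μ : ι → ℝ) (w : ι → n → ℝ) : (secondMoment μ w).IsHermitian := by
  ext a b
  simp only [secondMoment, Matrix.conjTranspose_apply, Matrix.of_apply, star_trivial]
  exact tsum_congr fun j => by ring

variable [Fintype n]

lemma dotProduct_sub_self_le (p c : n → ℝ) :
    (p - c) ⬝ᵥ (p - c) ≤ 2 * (p ⬝ᵥ p) + 2 * (c ⬝ᵥ c) := by
  simp only [dotProduct, Finset.mul_sum, ← Finset.sum_add_distrib]
  exact Finset.sum_le_sum fun i _ => by simp only [Pi.sub_apply]; nlinarith [sq_nonneg (p i + c i)]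

lemma abs_mul_le_dotProduct_self (w : n → ℝ) (a b : n) : |w a * w b| ≤ w ⬝ᵥ w := by
  have hle : ∀ c, w c * w c ≤ w ⬝ᵥ w := fun c =>
    Finset.single_le_sum (f := fun c => w c * w c) (fun c _ => mul_self_nonneg _)
      (Finset.mem_univ c)
  rw [abs_mul]
  nlinarith [hle a, hle b, sq_nonneg (|w a| - |w b|), abs_mul_abs_self (w a),
    abs_mul_abs_self (w b)]

variable {μ : ι → ℝ} {w : ι → n → ℝ}

lemma summable_mul_dotProduct_sub_self {p : ι → n → ℝ} (hμ : ∀ j, 0 ≤ μ j)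
    (h0 : Summable μ) (h2 : Summable fun j => μ j * (p j ⬝ᵥ p j)) (c : n → ℝ) :
    Summable fun j => μ j * ((p j - c) ⬝ᵥ (p j - c)) := by
  refine .of_nonneg_of_le (fun j => mul_nonneg (hμ j) ?_) (fun j => ?_)
    ((h2.mul_left 2).add (h0.mul_right (2 * (c ⬝ᵥ c))))
  · simpa using dotProduct_star_self_nonneg (p j - c)
  · nlinarith [mul_le_mul_of_nonneg_left (dotProduct_sub_self_le (p j) c) (hμ j)]

lemma summable_secondMoment_apply (hμ : ∀ j, 0 ≤ μ j)
    (h : Summable fun j => μ j * (w j ⬝ᵥ w j)) (a b : n) :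
    Summable fun j => μ j * w j a * w j b := by
  refine .of_norm_bounded h fun j => ?_
  rw [Real.norm_eq_abs, mul_assoc, abs_mul, abs_of_nonneg (hμ j)]
  exact mul_le_mul_of_nonneg_left (abs_mul_le_dotProduct_self (w j) a b) (hμ j)

lemma dotProduct_secondMoment_mulVec (hμ : ∀ j, 0 ≤ μ j)
    (h : Summable fun j => μ j * (w j ⬝ᵥ w j)) (x : n → ℝ) :
    x ⬝ᵥ secondMoment μ w *ᵥ x = ∑' j, μ j * (w j ⬝ᵥ x) ^ 2 := by
  have hab := summable_secondMoment_apply hμ h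
  calc x ⬝ᵥ secondMoment μ w *ᵥ x
      = ∑ a, ∑ b, ∑' j, x a * x b * (μ j * w j a * w j b) := by
        simp only [dotProduct, Matrix.mulVec, secondMoment, Matrix.of_apply, Finset.mul_sum,
          tsum_mul_left]
        exact Finset.sum_congr rfl fun a _ => Finset.sum_congr rfl fun b _ => by ring
    _ = ∑' j, ∑ a, ∑ b, x a * x b * (μ j * w j a * w j b) := by
        rw [Summable.tsum_finsetSum fun a _ => summable_sum fun b _ => (hab a b).mul_left _]
        exact Finset.sum_congr rfl fun a _ =>
          (Summable.tsum_finsetSum fun b _ => (hab a b).mul_left _).symm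
    _ = ∑' j, μ j * (w j ⬝ᵥ x) ^ 2 := by
        refine tsum_congr fun j => ?_
        simp only [dotProduct, sq, Finset.sum_mul, Finset.mul_sum]
        exact Finset.sum_congr rfl fun a _ => Finset.sum_congr rfl fun b _ => by ring

lemma dotProduct_secondMoment_mulVec_nonneg (hμ : ∀ j, 0 ≤ μ j)
    (h : Summable fun j => μ j * (w j ⬝ᵥ w j)) (x : n → ℝ) :
    0 ≤ x ⬝ᵥ secondMoment μ w *ᵥ x := by
  rw [dotProduct_secondMoment_mulVec hμ h]
  exact tsum_nonneg fun j => mul_nonneg (hμ j) (sq_nonneg _)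

lemma dotProduct_secondMoment_mulVec_le (hμ : ∀ j, 0 ≤ μ j)
    (h : Summable fun j => μ j * (w j ⬝ᵥ w j)) (x : n → ℝ) :
    x ⬝ᵥ secondMoment μ w *ᵥ x ≤ (∑' j, μ j * (w j ⬝ᵥ w j)) * (x ⬝ᵥ x) := by
  have hcs : ∀ j, μ j * (w j ⬝ᵥ x) ^ 2 ≤ μ j * (w j ⬝ᵥ w j) * (x ⬝ᵥ x) := fun j => by
    rw [mul_assoc]
    refine mul_le_mul_of_nonneg_left ?_ (hμ j)
    simpa only [dotProduct, sq] using Finset.sum_mul_sq_le_sq_mul_sq Finset.univ (w j) x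
  rw [dotProduct_secondMoment_mulVec hμ h, ← tsum_mul_right]
  exact (h.mul_right _).of_nonneg_of_le (fun j => mul_nonneg (hμ j) (sq_nonneg _)) hcs
    |>.tsum_le_tsum hcs (h.mul_right _)

end SecondMoment

section TemperatureTensor

variable {ν T : ℝ} {Θ : Matrix (Fin 3) (Fin 3) ℝ}

lemma tensorOf_isHermitian (hΘ : Θ.IsHermitian) : (tensorOf ν T Θ).IsHermitian :=
  (isHermitian_one.smul (IsSelfAdjoint.all _)).add (hΘ.smul (IsSelfAdjoint.all _))

lemma dotProduct_tensorOf_mulVec (x : Fin 3 → ℝ) :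
    x ⬝ᵥ tensorOf ν T Θ *ᵥ x = (1 - ν) * T * (x ⬝ᵥ x) + ν * (x ⬝ᵥ Θ *ᵥ x) := by
  simp only [tensorOf, add_mulVec, smul_mulVec, one_mulVec, dotProduct_add,
    dotProduct_smul, smul_eq_mul]

lemma min_mul_le_dotProduct_tensorOf_mulVec (hpos : ∀ x, 0 ≤ x ⬝ᵥ Θ *ᵥ x)
    (hle : ∀ x, x ⬝ᵥ Θ *ᵥ x ≤ 3 * T * (x ⬝ᵥ x)) (x : Fin 3 → ℝ) :
    min (1 - ν) (1 + 2 * ν) * T * (x ⬝ᵥ x) ≤ x ⬝ᵥ tensorOf ν T Θ *ᵥ x := by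
  rw [dotProduct_tensorOf_mulVec]
  rcases le_total 0 ν with h | h
  · rw [min_eq_left (by linarith)]
    nlinarith [mul_nonneg h (hpos x)]
  · rw [min_eq_right (by linarith)]
    nlinarith [mul_le_mul_of_nonpos_left (hle x) h]

lemma dotProduct_tensorOf_mulVec_le_max_mul (hpos : ∀ x, 0 ≤ x ⬝ᵥ Θ *ᵥ x)
    (hle : ∀ x, x ⬝ᵥ Θ *ᵥ x ≤ 3 * T * (x ⬝ᵥ x)) (x : Fin 3 → ℝ) :
    x ⬝ᵥ tensorOf ν T Θ *ᵥ x ≤ max (1 - ν) (1 + 2 * ν) * T * (x ⬝ᵥ x) := by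
  rw [dotProduct_tensorOf_mulVec]
  rcases le_total 0 ν with h | h
  · rw [max_eq_right (by linarith)]
    nlinarith [mul_le_mul_of_nonneg_left (hle x) h]
  · rw [max_eq_left (by linarith)]
    nlinarith [mul_nonpos_of_nonpos_of_nonneg h (hpos x)]

lemma tensorOf_det_bounds (hν : ν ∈ Set.Icc (-(1 / 2) : ℝ) 1) (hΘ : Θ.IsHermitian)
    (hpos : ∀ x, 0 ≤ x ⬝ᵥ Θ *ᵥ x) (hle : ∀ x, x ⬝ᵥ Θ *ᵥ x ≤ 3 * T * (x ⬝ᵥ x)) :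
    min (1 - ν) (1 + 2 * ν) ^ 3 * T ^ 3 ≤ (tensorOf ν T Θ).det ∧
      (tensorOf ν T Θ).det ≤ max (1 - ν) (1 + 2 * ν) ^ 3 * T ^ 3 := by
  have hT : 0 ≤ T := by simpa using (hpos (Pi.single 0 1)).trans (hle (Pi.single 0 1))
  have hm : 0 ≤ min (1 - ν) (1 + 2 * ν) * T :=
    mul_nonneg (le_min (by linarith [hν.2]) (by linarith [hν.1])) hT
  have hlow := min_mul_le_dotProduct_tensorOf_mulVec (ν := ν) hpos hle
  have hqpos x : 0 ≤ x ⬝ᵥ tensorOf ν T Θ *ᵥ x :=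
    (mul_nonneg hm (by simpa using dotProduct_star_self_nonneg x)).trans (hlow x)
  have hM := tensorOf_isHermitian (ν := ν) (T := T) hΘ
  rw [← mul_pow, ← mul_pow]
  simpa using And.intro (hM.pow_card_le_det hm hlow)
    (hM.det_le_pow_card hqpos (dotProduct_tensorOf_mulVec_le_max_mul hpos hle))

end TemperatureTensor

section DiscreteMoments

variable {Δv : ℝ} {f : Idx3 → ℝ}

lemma enorm3_sq (v : V3) : enorm3 v ^ 2 = v ⬝ᵥ v := by
  rw [enorm3, Real.sq_sqrt (Finset.sum_nonneg fun a _ => sq_nonneg _)]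
  simp only [dotProduct, sq]

lemma dTheta_eq_smul_secondMoment :
    dTheta Δv f = (dRho Δv f)⁻¹ •
      secondMoment (fun j => f j * Δv ^ 3) (fun j => gridV Δv j - dU Δv f) := by
  ext a b
  simp only [dTheta, secondMoment, Matrix.smul_apply, Matrix.of_apply, Pi.sub_apply, smul_eq_mul]
  exact congrArg _ (tsum_congr fun j => by ring)

lemma dT_eq :
    dT Δv f = (3 * dRho Δv f)⁻¹ *
      ∑' j, f j * Δv ^ 3 * ((gridV Δv j - dU Δv f) ⬝ᵥ (gridV Δv j - dU Δv f)) := by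
  simp only [dT, ← enorm3_sq]
  exact congrArg _ (tsum_congr fun j => by rw [mul_right_comm]; rfl)

lemma dTheta_isHermitian : (dTheta Δv f).IsHermitian := by
  rw [dTheta_eq_smul_secondMoment]
  exact (secondMoment_isHermitian _ _).smul (IsSelfAdjoint.all _)

lemma summable_centered_secondMoment (hΔv : 0 ≤ Δv) (hf : ∀ j, 0 ≤ f j)
    (hsum0 : Summable fun j : Idx3 => f j * Δv ^ 3)
    (hsum2 : Summable fun j : Idx3 => f j * enorm3 (gridV Δv j) ^ 2 * Δv ^ 3) :
    Summable fun j => f j * Δv ^ 3 * ((gridV Δv j - dU Δv f) ⬝ᵥ (gridV Δv j - dU Δv f)) :=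
  summable_mul_dotProduct_sub_self (fun j => mul_nonneg (hf j) (pow_nonneg hΔv 3)) hsum0
    (hsum2.congr fun j => by rw [enorm3_sq]; ring) _

lemma dotProduct_dTheta_mulVec_nonneg (hΔv : 0 ≤ Δv) (hf : ∀ j, 0 ≤ f j)
    (hsum0 : Summable fun j : Idx3 => f j * Δv ^ 3)
    (hsum2 : Summable fun j : Idx3 => f j * enorm3 (gridV Δv j) ^ 2 * Δv ^ 3) (x : V3) :
    0 ≤ x ⬝ᵥ dTheta Δv f *ᵥ x := by
  have hμ j : 0 ≤ f j * Δv ^ 3 := mul_nonneg (hf j) (pow_nonneg hΔv 3)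
  rw [dTheta_eq_smul_secondMoment, smul_mulVec, dotProduct_smul, smul_eq_mul]
  exact mul_nonneg (inv_nonneg.2 (tsum_nonneg hμ)) (dotProduct_secondMoment_mulVec_nonneg hμ
    (summable_centered_secondMoment hΔv hf hsum0 hsum2) x)

lemma dotProduct_dTheta_mulVec_le (hΔv : 0 ≤ Δv) (hf : ∀ j, 0 ≤ f j)
    (hsum0 : Summable fun j : Idx3 => f j * Δv ^ 3)
    (hsum2 : Summable fun j : Idx3 => f j * enorm3 (gridV Δv j) ^ 2 * Δv ^ 3) (x : V3) :
    x ⬝ᵥ dTheta Δv f *ᵥ x ≤ 3 * dT Δv f * (x ⬝ᵥ x) := by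
  have hμ j : 0 ≤ f j * Δv ^ 3 := mul_nonneg (hf j) (pow_nonneg hΔv 3)
  rw [dTheta_eq_smul_secondMoment, smul_mulVec, dotProduct_smul, smul_eq_mul, dT_eq, mul_inv]
  calc _ ≤ (dRho Δv f)⁻¹ * ((∑' j, f j * Δv ^ 3 *
          ((gridV Δv j - dU Δv f) ⬝ᵥ (gridV Δv j - dU Δv f))) * (x ⬝ᵥ x)) :=
        mul_le_mul_of_nonneg_left (dotProduct_secondMoment_mulVec_le hμ
          (summable_centered_secondMoment hΔv hf hsum0 hsum2) x) (inv_nonneg.2 (tsum_nonneg hμ))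
    _ = _ := by ring

end DiscreteMoments

theorem discrete_temperature_tensor_det_equivalence_general
    (nt Δv : ℝ) (hnt : nt ∈ Set.Ioo (-(1 / 2) : ℝ) 1) (hΔv : 0 < Δv)
    (f : Idx3 → ℝ) (hf : ∀ j, 0 ≤ f j)
    (hsum0 : Summable fun j : Idx3 => f j * Δv ^ 3)
    (hsum2 : Summable fun j : Idx3 => f j * enorm3 (gridV Δv j) ^ 2 * Δv ^ 3) :
    min (1 - nt) (1 + 2 * nt) ^ 3 * dT Δv f ^ 3
        ≤ (tensorOf nt (dT Δv f) (dTheta Δv f)).det ∧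
      (tensorOf nt (dT Δv f) (dTheta Δv f)).det
        ≤ max (1 - nt) (1 + 2 * nt) ^ 3 * dT Δv f ^ 3 :=
  tensorOf_det_bounds (Set.Ioo_subset_Icc_self hnt) dTheta_isHermitian
    (dotProduct_dTheta_mulVec_nonneg hΔv.le hf hsum0 hsum2)
    (dotProduct_dTheta_mulVec_le hΔv.le hf hsum0 hsum2)

/-- equivalence of the determinant of the discrete temperature tensor with the
cube of the discrete temperature. -/
theorem discrete_temperature_tensor_det_equivalence
    (nt Δv : ℝ) (hnt : nt ∈ Set.Ioo (-(1 / 2) : ℝ) 1) (hΔv : 0 < Δv)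
    (f : Idx3 → ℝ) (hf : ∀ j, 0 ≤ f j)
    (hsum0 : Summable fun j : Idx3 => f j * Δv ^ 3)
    (hsum2 : Summable fun j : Idx3 => f j * enorm3 (gridV Δv j) ^ 2 * Δv ^ 3)
    (hρ : 0 < dRho Δv f) :
    min (1 - nt) (1 + 2 * nt) ^ 3 * dT Δv f ^ 3
        ≤ (tensorOf nt (dT Δv f) (dTheta Δv f)).det ∧
      (tensorOf nt (dT Δv f) (dTheta Δv f)).det
        ≤ max (1 - nt) (1 + 2 * nt) ^ 3 * dT Δv f ^ 3 :=
  discrete_temperature_tensor_det_equivalence_general nt Δv hnt hΔv f hf hsum0 hsum2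

end
end

section
/- Let q > 5 and Δv > 0. There exists a constant C_M > 0, depending only on q, with the following property. Let f : ℤ³ → [0,∞) satisfy 0 < N := sup_{j∈ℤ³} f_j(1+|v_j|)^q < ∞, where v_j = jΔv ∈ ℝ³, and let ρ = Σ_j f_j Δv³ > 0, U = (1/ρ)Σ_j f_j v_j Δv³, T = (1/(3ρ))Σ_j f_j|v_j − U|² Δv³. If Δv ≤ ((π/(q−5))·N/ρ)^{1/(q−3)}, then ρ·(T + |U|²)^{(q−3)/2} ≤ C_M · N. -/
noncomputable section

open Real MeasureTheory

/-!
Split the second moment `m₂ = ∑ f_j |v_j|² Δv³` at a radius `K`. Inside the ball `|v_j|² ≤ K²`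
contributes at most `K² ρ`; outside, `f_j ≤ N |v_j|^{-q}`, and counting the `≤ 26 n²` lattice
points on each sup-norm sphere of radius `n` bounds `∑_{|v_j| > K} |v_j|^{2-q} Δv³` by
`C K^{5-q}`, uniformly in `Δv`. The radius with `K^{q-3} = N/ρ` makes both terms of order `K² ρ`.
The variance decomposition `3ρT + ρ|U|² = m₂` gives `ρ (T + |U|²) ≤ m₂ ≤ (1 + C) K² ρ`, and
raising to the power `(q-3)/2` turns `ρ K^{q-3}` into `N`.
-/

open Finset

lemma sum_rpow_neg_le_of_forall_lt {s L : ℝ} (hs : 1 < s) (hL : 0 < L) (u : Finset ℕ)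
    (hu : ∀ n ∈ u, L < n) :
    ∑ n ∈ u, (n : ℝ) ^ (-s) ≤ (1 + 1 / (s - 1)) * L ^ (1 - s) := by
  set a := ⌊L⌋₊ + 1
  set M := max a (u.sup id)
  have hLa : L < a := by simpa [a] using Nat.lt_floor_add_one L
  have ha : (1 : ℝ) ≤ a := by simp [a]
  have hs1 : 0 < s - 1 := by linarith
  have haL : (a : ℝ) ^ (1 - s) ≤ L ^ (1 - s) := rpow_le_rpow_of_nonpos hL hLa.le (by linarith)
  have hsub : u ⊆ Ico a (M + 1) := fun n hn =>
    mem_Ico.2 ⟨(Nat.floor_lt hL.le).2 (hu n hn),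
      Nat.lt_succ_of_le (le_max_of_le_right (le_sup (f := id) hn))⟩
  have hfirst : (a : ℝ) ^ (-s) ≤ L ^ (1 - s) :=
    (rpow_le_rpow_of_exponent_le ha (by linarith)).trans haL
  have hrest : ∑ i ∈ Ico a M, ((i + 1 : ℕ) : ℝ) ^ (-s) ≤ L ^ (1 - s) / (s - 1) := by
    have hanti : AntitoneOn (fun x : ℝ => x ^ (-s)) (Set.Icc a M) :=
      (antitoneOn_rpow_Ioi_of_exponent_nonpos (by linarith)).mono
        fun x hx => lt_of_lt_of_le (by linarith) hx.1
    have hM : (0 : ℝ) ∉ Set.uIcc (a : ℝ) M := by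
      rw [Set.uIcc_of_le (by exact_mod_cast le_max_left _ _)]
      exact fun h => by linarith [h.1]
    calc ∑ i ∈ Ico a M, ((i + 1 : ℕ) : ℝ) ^ (-s)
        ≤ ∫ x in (a : ℝ)..M, x ^ (-s) := hanti.sum_le_integral_Ico (le_max_left _ _)
      _ = ((a : ℝ) ^ (1 - s) - (M : ℝ) ^ (1 - s)) / (s - 1) := by
        have : 1 - s ≠ 0 := by linarith
        rw [integral_rpow (Or.inr ⟨by linarith, hM⟩), show -s + 1 = 1 - s by ring]
        field_simp
        ring
      _ ≤ L ^ (1 - s) / (s - 1) := by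
        gcongr
        linarith [rpow_nonneg (Nat.cast_nonneg M) (1 - s)]
  calc ∑ n ∈ u, (n : ℝ) ^ (-s)
      ≤ ∑ n ∈ Ico a (M + 1), (n : ℝ) ^ (-s) :=
        sum_le_sum_of_subset_of_nonneg hsub fun _ _ _ => by positivity
    _ = (a : ℝ) ^ (-s) + ∑ i ∈ Ico a M, ((i + 1 : ℕ) : ℝ) ^ (-s) := by
        rw [sum_eq_sum_Ico_succ_bot (by omega), sum_Ico_add' (fun n : ℕ => (n : ℝ) ^ (-s))]
    _ ≤ L ^ (1 - s) + L ^ (1 - s) / (s - 1) := add_le_add hfirst hrest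
    _ = (1 + 1 / (s - 1)) * L ^ (1 - s) := by ring

def supNatAbs {ι : Type*} [Fintype ι] (j : ι → ℤ) : ℕ := univ.sup fun a => (j a).natAbs

lemma natAbs_le_supNatAbs {ι : Type*} [Fintype ι] (j : ι → ℤ) (a : ι) :
    (j a).natAbs ≤ supNatAbs j :=
  le_sup (f := fun a => (j a).natAbs) (mem_univ a)

lemma card_le_of_forall_supNatAbs_eq {ι : Type*} [Fintype ι] [DecidableEq ι] {n : ℕ}
    (hn : 1 ≤ n) {t : Finset (ι → ℤ)} (ht : ∀ j ∈ t, supNatAbs j = n) :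
    #t ≤ (2 * n + 1) ^ Fintype.card ι - (2 * n - 1) ^ Fintype.card ι := by
  set box : ℕ → Finset (ι → ℤ) := fun m => Fintype.piFinset fun _ => Icc (-(m : ℤ)) m
  have mem_box : ∀ m j, j ∈ box m ↔ supNatAbs j ≤ m := by
    intro m j
    simp only [box, Fintype.mem_piFinset, mem_Icc, supNatAbs, Finset.sup_le_iff, mem_univ,
      true_implies]
    exact forall_congr' fun a => by omega
  have card_box : ∀ m, #(box m) = (2 * m + 1) ^ Fintype.card ι := by
    intro m
    simp only [box, Fintype.card_piFinset, Int.card_Icc, prod_const, card_univ]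
    congr 1
    omega
  have hsub : t ⊆ box n \ box (n - 1) := fun j hj => by
    rw [mem_sdiff, mem_box, mem_box, ht j hj]
    omega
  calc #t ≤ #(box n \ box (n - 1)) := card_le_card hsub
    _ = (2 * n + 1) ^ Fintype.card ι - (2 * n - 1) ^ Fintype.card ι := by
      rw [card_sdiff_of_subset fun j hj => by rw [mem_box] at hj ⊢; omega, card_box, card_box,
        show 2 * (n - 1) + 1 = 2 * n - 1 by omega]

lemma card_le_of_forall_supNatAbs_eq_three {n : ℕ} (hn : 1 ≤ n) {t : Finset Idx3}
    (ht : ∀ j ∈ t, supNatAbs j = n) : (#t : ℝ) ≤ 26 * (n : ℝ) ^ 2 := by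
  have h := card_le_of_forall_supNatAbs_eq hn ht
  rw [Fintype.card_fin] at h
  obtain ⟨m, rfl⟩ : ∃ m, n = m + 1 := ⟨n - 1, by omega⟩
  have : (2 * (m + 1) + 1) ^ 3 - (2 * (m + 1) - 1) ^ 3 ≤ 26 * (m + 1) ^ 2 := by
    rw [show 2 * (m + 1) - 1 = 2 * m + 1 by omega, Nat.sub_le_iff_le_add]
    ring_nf
    nlinarith
  exact_mod_cast h.trans this

lemma enorm3_nonneg (v : V3) : 0 ≤ enorm3 v := Real.sqrt_nonneg _

lemma sq_enorm3 (v : V3) : enorm3 v ^ 2 = ∑ a, v a ^ 2 := Real.sq_sqrt (by positivity)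

lemma abs_le_enorm3 (v : V3) (a : Fin 3) : |v a| ≤ enorm3 v := by
  rw [← Real.sqrt_sq_eq_abs]
  exact Real.sqrt_le_sqrt (single_le_sum (fun b _ => sq_nonneg (v b)) (mem_univ a))

lemma enorm3_le_sqrt_three_mul {v : V3} {M : ℝ} (h : ∀ a, |v a| ≤ M) :
    enorm3 v ≤ √3 * M := by
  have hM : 0 ≤ M := (abs_nonneg _).trans (h 0)
  rw [← Real.sqrt_sq hM, ← Real.sqrt_mul (by norm_num)]
  refine Real.sqrt_le_sqrt ?_
  calc ∑ a, v a ^ 2 ≤ ∑ _a : Fin 3, M ^ 2 :=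
        sum_le_sum fun a _ => sq_le_sq' (abs_le.1 (h a)).1 (abs_le.1 (h a)).2
    _ = 3 * M ^ 2 := by simp

lemma abs_gridV {Δv : ℝ} (hΔv : 0 ≤ Δv) (j : Idx3) (a : Fin 3) :
    |gridV Δv j a| = (j a).natAbs * Δv := by
  rw [gridV, abs_mul, abs_of_nonneg hΔv, Nat.cast_natAbs, Int.cast_abs]

lemma supNatAbs_mul_le_enorm3_gridV {Δv : ℝ} (hΔv : 0 ≤ Δv) (j : Idx3) :
    supNatAbs j * Δv ≤ enorm3 (gridV Δv j) := by
  obtain ⟨a, -, ha⟩ := exists_mem_eq_sup univ univ_nonempty fun a => (j a).natAbs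
  rw [supNatAbs, ha, ← abs_gridV hΔv]
  exact abs_le_enorm3 _ a

lemma enorm3_gridV_le {Δv : ℝ} (hΔv : 0 ≤ Δv) (j : Idx3) :
    enorm3 (gridV Δv j) ≤ √3 * (supNatAbs j * Δv) :=
  enorm3_le_sqrt_three_mul fun a => by
    rw [abs_gridV hΔv]
    gcongr
    exact_mod_cast natAbs_le_supNatAbs j a

/-- `26 n²` bounds the lattice points on the sup-norm sphere of radius `n`, `√3` compares the sup
norm with the Euclidean one, and `1 + 1 / (β - 3)` comes from the integral test for `∑ n ^ (2 - β)`.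
-/
def gridTailConst (β : ℝ) : ℝ := 26 * (1 + 1 / (β - 3)) * √3 ^ (β - 3)

lemma gridTailConst_pos {β : ℝ} (hβ : 3 < β) : 0 < gridTailConst β := by
  have : 0 < β - 3 := by linarith
  unfold gridTailConst
  positivity

lemma sum_enorm3_gridV_rpow_le {β Δv R : ℝ} (hβ : 3 < β) (hΔv : 0 < Δv) (hR : 0 < R)
    {t : Finset Idx3} (ht : ∀ j ∈ t, R < enorm3 (gridV Δv j)) :
    ∑ j ∈ t, enorm3 (gridV Δv j) ^ (-β) * Δv ^ 3 ≤ gridTailConst β * R ^ (3 - β) := by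
  classical
  set L := R / (√3 * Δv)
  have hL : 0 < L := by positivity
  have hLt : ∀ j ∈ t, L < supNatAbs j := fun j hj => by
    rw [div_lt_iff₀ (by positivity), ← mul_assoc, mul_comm _ √3, mul_assoc]
    exact (ht j hj).trans_le (enorm3_gridV_le hΔv.le j)
  have hterm : ∀ j ∈ t, enorm3 (gridV Δv j) ^ (-β) * Δv ^ 3
      ≤ Δv ^ (3 - β) * (supNatAbs j : ℝ) ^ (-β) := fun j hj => by
    have hn : 0 < (supNatAbs j : ℝ) := hL.trans (hLt j hj)
    calc enorm3 (gridV Δv j) ^ (-β) * Δv ^ 3 ≤ (supNatAbs j * Δv) ^ (-β) * Δv ^ 3 := by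
          refine mul_le_mul_of_nonneg_right ?_ (by positivity)
          exact rpow_le_rpow_of_nonpos (by positivity) (supNatAbs_mul_le_enorm3_gridV hΔv.le j)
            (by linarith)
      _ = Δv ^ (3 - β) * (supNatAbs j : ℝ) ^ (-β) := by
          rw [mul_rpow hn.le hΔv.le, rpow_sub hΔv, rpow_neg hΔv.le, rpow_ofNat]
          ring
  have hshell : ∀ n ∈ t.image supNatAbs,
      (#{j ∈ t | supNatAbs j = n} : ℝ) * (n : ℝ) ^ (-β) ≤ 26 * (n : ℝ) ^ (-(β - 2)) := by
    intro n hn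
    obtain ⟨j, hj, rfl⟩ := mem_image.1 hn
    have hpos : 0 < (supNatAbs j : ℝ) := hL.trans (hLt j hj)
    calc (#{i ∈ t | supNatAbs i = supNatAbs j} : ℝ) * (supNatAbs j : ℝ) ^ (-β)
        ≤ 26 * (supNatAbs j : ℝ) ^ 2 * (supNatAbs j : ℝ) ^ (-β) := by
          gcongr
          exact card_le_of_forall_supNatAbs_eq_three (by exact_mod_cast hpos)
            fun i hi => (mem_filter.1 hi).2
      _ = 26 * (supNatAbs j : ℝ) ^ (-(β - 2)) := by
          rw [mul_assoc, ← rpow_natCast, ← rpow_add hpos]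
          norm_num
          ring_nf
  have hscale : Δv ^ (3 - β) * L ^ (1 - (β - 2)) = √3 ^ (β - 3) * R ^ (3 - β) := by
    rw [show 1 - (β - 2) = 3 - β by ring, ← mul_rpow hΔv.le hL.le,
      show Δv * L = R / √3 by simp only [L]; field_simp, div_rpow hR.le (by positivity),
      div_eq_mul_inv, ← rpow_neg (by positivity), neg_sub, mul_comm]
  calc ∑ j ∈ t, enorm3 (gridV Δv j) ^ (-β) * Δv ^ 3
      ≤ ∑ j ∈ t, Δv ^ (3 - β) * (supNatAbs j : ℝ) ^ (-β) := sum_le_sum hterm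
    _ = Δv ^ (3 - β) *
          ∑ n ∈ t.image supNatAbs, (#{j ∈ t | supNatAbs j = n} : ℝ) * (n : ℝ) ^ (-β) := by
        rw [← mul_sum, sum_comp (fun n : ℕ => (n : ℝ) ^ (-β)) supNatAbs]
        simp only [nsmul_eq_mul]
    _ ≤ Δv ^ (3 - β) * ∑ n ∈ t.image supNatAbs, 26 * (n : ℝ) ^ (-(β - 2)) :=
        mul_le_mul_of_nonneg_left (sum_le_sum hshell) (by positivity)
    _ ≤ Δv ^ (3 - β) * (26 * ((1 + 1 / (β - 2 - 1)) * L ^ (1 - (β - 2)))) := by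
        rw [← mul_sum]
        gcongr
        exact sum_rpow_neg_le_of_forall_lt (by linarith) hL _ fun n hn => by
          obtain ⟨j, hj, rfl⟩ := mem_image.1 hn
          exact hLt j hj
    _ = gridTailConst β * R ^ (3 - β) := by
        rw [gridTailConst, show β - 2 - 1 = β - 3 by ring]
        linear_combination (26 * (1 + 1 / (β - 3))) * hscale

lemma mul_sq_le_of_mul_one_add_rpow_le {x e q N : ℝ} (hx : 0 ≤ x) (he : 0 < e) (hq : 0 ≤ q)
    (h : x * (1 + e) ^ q ≤ N) : x * e ^ 2 ≤ N * e ^ (2 - q) := by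
  have hxe : x * e ^ q ≤ N :=
    (mul_le_mul_of_nonneg_left (rpow_le_rpow he.le (by linarith) hq) hx).trans h
  calc x * e ^ 2 = x * e ^ q * e ^ (2 - q) := by
        rw [mul_assoc, ← rpow_add he, add_sub_cancel, rpow_two]
    _ ≤ N * e ^ (2 - q) := mul_le_mul_of_nonneg_right hxe (by positivity)

lemma sum_mul_sq_enorm3_gridV_le {q Δv N K : ℝ} (hq : 5 < q) (hΔv : 0 < Δv) (hK : 0 < K)
    {f : Idx3 → ℝ} (hf : ∀ j, 0 ≤ f j) (hfN : ∀ j, f j * (1 + enorm3 (gridV Δv j)) ^ q ≤ N)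
    (hρ : Summable fun j => f j * Δv ^ 3) (t : Finset Idx3) :
    ∑ j ∈ t, f j * enorm3 (gridV Δv j) ^ 2 * Δv ^ 3
      ≤ K ^ 2 * dRho Δv f + gridTailConst (q - 2) * N * K ^ (5 - q) := by
  classical
  have hN : 0 ≤ N :=
    (mul_nonneg (hf 0) (rpow_nonneg (by linarith [enorm3_nonneg (gridV Δv 0)]) q)).trans (hfN 0)
  rw [← sum_filter_add_sum_filter_not t fun j => enorm3 (gridV Δv j) ≤ K]
  gcongr ?_ + ?_
  · calc ∑ j ∈ t with enorm3 (gridV Δv j) ≤ K, f j * enorm3 (gridV Δv j) ^ 2 * Δv ^ 3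
        ≤ ∑ j ∈ t with enorm3 (gridV Δv j) ≤ K, K ^ 2 * (f j * Δv ^ 3) := by
          refine sum_le_sum fun j hj => ?_
          have he := (mem_filter.1 hj).2
          have : enorm3 (gridV Δv j) ^ 2 ≤ K ^ 2 :=
            pow_le_pow_left₀ (enorm3_nonneg _) he 2
          nlinarith [mul_nonneg (hf j) (by positivity : (0 : ℝ) ≤ Δv ^ 3)]
      _ ≤ K ^ 2 * dRho Δv f := by
          rw [← mul_sum]
          exact mul_le_mul_of_nonneg_left
            (hρ.sum_le_tsum _ fun j _ => mul_nonneg (hf j) (by positivity)) (by positivity)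
  · calc ∑ j ∈ t with ¬enorm3 (gridV Δv j) ≤ K, f j * enorm3 (gridV Δv j) ^ 2 * Δv ^ 3
        ≤ ∑ j ∈ t with ¬enorm3 (gridV Δv j) ≤ K,
            N * (enorm3 (gridV Δv j) ^ (-(q - 2)) * Δv ^ 3) := by
          refine sum_le_sum fun j hj => ?_
          have he : K < enorm3 (gridV Δv j) := not_le.1 (mem_filter.1 hj).2
          rw [← mul_assoc, neg_sub]
          exact mul_le_mul_of_nonneg_right
            (mul_sq_le_of_mul_one_add_rpow_le (hf j) (hK.trans he) (by linarith) (hfN j))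
            (by positivity)
      _ ≤ N * (gridTailConst (q - 2) * K ^ (3 - (q - 2))) := by
          rw [← mul_sum]
          exact mul_le_mul_of_nonneg_left (sum_enorm3_gridV_rpow_le (by linarith) hΔv hK
            fun j hj => not_le.1 (mem_filter.1 hj).2) hN
      _ = gridTailConst (q - 2) * N * K ^ (5 - q) := by ring_nf

lemma summable_mul_of_summable_mul_sq {ι : Type*} {w y : ι → ℝ} (hw0 : ∀ i, 0 ≤ w i)
    (hw : Summable w) (hwy : Summable fun i => w i * y i ^ 2) :
    Summable fun i => w i * y i :=
  (hw.add hwy).of_norm_bounded fun i => by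
    rw [Real.norm_eq_abs, abs_mul, abs_of_nonneg (hw0 i)]
    nlinarith [hw0 i, abs_nonneg (y i), sq_abs (y i), mul_nonneg (hw0 i) (sq_nonneg (|y i| - 1))]

lemma summable_mul_sub_sq {ι : Type*} {w y : ι → ℝ} (hw : Summable w)
    (hwy : Summable fun i => w i * y i) (hwy2 : Summable fun i => w i * y i ^ 2) (c : ℝ) :
    Summable fun i => w i * (y i - c) ^ 2 :=
  ((hwy2.sub (hwy.mul_left (2 * c))).add (hw.mul_left (c ^ 2))).congr fun i => by ring

lemma tsum_mul_sub_sq {ι : Type*} {w y : ι → ℝ} (hw : Summable w)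
    (hwy : Summable fun i => w i * y i) (hwy2 : Summable fun i => w i * y i ^ 2) (c : ℝ) :
    ∑' i, w i * (y i - c) ^ 2
      = ∑' i, w i * y i ^ 2 - 2 * c * ∑' i, w i * y i + c ^ 2 * ∑' i, w i := by
  rw [← tsum_mul_left, ← tsum_mul_left, ← hwy2.tsum_sub (hwy.mul_left _),
    ← (hwy2.sub (hwy.mul_left _)).tsum_add (hw.mul_left _)]
  exact tsum_congr fun i => by ring

def dM2 (Δv : ℝ) (h : Idx3 → ℝ) : ℝ := ∑' j : Idx3, h j * enorm3 (gridV Δv j) ^ 2 * Δv ^ 3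

lemma three_mul_dRho_mul_dT {Δv : ℝ} (hΔv : 0 ≤ Δv) {f : Idx3 → ℝ} (hf : ∀ j, 0 ≤ f j)
    (h0 : Summable fun j => f j * Δv ^ 3)
    (h2 : Summable fun j => f j * enorm3 (gridV Δv j) ^ 2 * Δv ^ 3) (hρ : dRho Δv f ≠ 0) :
    3 * dRho Δv f * dT Δv f = dM2 Δv f - dRho Δv f * enorm3 (dU Δv f) ^ 2 := by
  set w : Idx3 → ℝ := fun j => f j * Δv ^ 3
  have hw0 : ∀ j, 0 ≤ w j := fun j => mul_nonneg (hf j) (by positivity)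
  have hsq : ∀ a, Summable fun j => w j * gridV Δv j a ^ 2 := fun a =>
    h2.of_nonneg_of_le (fun j => mul_nonneg (hw0 j) (sq_nonneg _)) fun j => by
      have : gridV Δv j a ^ 2 ≤ enorm3 (gridV Δv j) ^ 2 := by
        rw [sq_enorm3]
        exact single_le_sum (fun b _ => sq_nonneg (gridV Δv j b)) (mem_univ a)
      calc w j * gridV Δv j a ^ 2 ≤ w j * enorm3 (gridV Δv j) ^ 2 :=
            mul_le_mul_of_nonneg_left this (hw0 j)
        _ = f j * enorm3 (gridV Δv j) ^ 2 * Δv ^ 3 := by ring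
  have hlin : ∀ a, Summable fun j => w j * gridV Δv j a := fun a =>
    summable_mul_of_summable_mul_sq hw0 h0 (hsq a)
  have hU : ∀ a, ∑' j, w j * gridV Δv j a = dRho Δv f * dU Δv f a := fun a => by
    rw [dU, mul_inv_cancel_left₀ hρ]
    exact tsum_congr fun j => by ring
  have hM2 : dM2 Δv f = ∑ a, ∑' j, w j * gridV Δv j a ^ 2 := by
    rw [← Summable.tsum_finsetSum fun a _ => hsq a, dM2]
    exact tsum_congr fun j => by rw [sq_enorm3, ← mul_sum]; ring
  calc 3 * dRho Δv f * dT Δv f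
      = ∑' j, w j * enorm3 (fun a => gridV Δv j a - dU Δv f a) ^ 2 := by
        rw [dT, ← mul_assoc, mul_inv_cancel₀ (by simpa using hρ), one_mul]
        exact tsum_congr fun j => by ring
    _ = ∑ a, ∑' j, w j * (gridV Δv j a - dU Δv f a) ^ 2 := by
        rw [← Summable.tsum_finsetSum fun a _ => summable_mul_sub_sq h0 (hlin a) (hsq a) _]
        exact tsum_congr fun j => by rw [sq_enorm3, mul_sum]
    _ = ∑ a, (∑' j, w j * gridV Δv j a ^ 2 - dRho Δv f * dU Δv f a ^ 2) :=
        sum_congr rfl fun a _ => by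
          rw [tsum_mul_sub_sq h0 (hlin a) (hsq a), hU a]
          simp only [w, dRho]
          ring
    _ = dM2 Δv f - dRho Δv f * enorm3 (dU Δv f) ^ 2 := by
        rw [sum_sub_distrib, hM2, ← mul_sum, sq_enorm3]

lemma dT_nonneg {Δv : ℝ} (hΔv : 0 ≤ Δv) {f : Idx3 → ℝ} (hf : ∀ j, 0 ≤ f j) : 0 ≤ dT Δv f :=
  mul_nonneg (inv_nonneg.2 (mul_nonneg zero_le_three
    (tsum_nonneg fun j => mul_nonneg (hf j) (by positivity))))
    (tsum_nonneg fun j => mul_nonneg (mul_nonneg (hf j) (sq_nonneg _)) (by positivity))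

lemma dRho_mul_dT_add_sq_enorm3_dU_le {Δv : ℝ} (hΔv : 0 ≤ Δv) {f : Idx3 → ℝ}
    (hf : ∀ j, 0 ≤ f j) (h0 : Summable fun j => f j * Δv ^ 3)
    (h2 : Summable fun j => f j * enorm3 (gridV Δv j) ^ 2 * Δv ^ 3) (hρ : 0 < dRho Δv f) :
    dRho Δv f * (dT Δv f + enorm3 (dU Δv f) ^ 2) ≤ dM2 Δv f := by
  have h := three_mul_dRho_mul_dT hΔv hf h0 h2 hρ.ne'
  nlinarith [mul_nonneg hρ.le (dT_nonneg hΔv hf)]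

lemma mul_rpow_le_of_forall_le {ρ x N C p : ℝ} (hρ : 0 < ρ) (hN : 0 < N) (hp : 0 < p)
    (hx : 0 ≤ x) (hC : 0 ≤ C) (h : ∀ K > 0, ρ * x ≤ K ^ 2 * ρ + C * N * K ^ (2 - p)) :
    ρ * x ^ (p / 2) ≤ (1 + C) ^ (p / 2) * N := by
  set K := (N / ρ) ^ p⁻¹
  have hK : 0 < K := by positivity
  have hKp : K ^ p = N / ρ := by rw [← rpow_mul (by positivity), inv_mul_cancel₀ hp.ne', rpow_one]
  have hx_le : x ≤ (1 + C) * K ^ 2 := by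
    have h2p : K ^ (2 - p) = K ^ 2 * ρ / N := by
      rw [rpow_sub hK, hKp, rpow_two]
      field_simp
    have := h K hK
    rw [h2p] at this
    have : ρ * x ≤ ρ * ((1 + C) * K ^ 2) := by
      convert this using 1
      field_simp
    exact le_of_mul_le_mul_left this hρ
  calc ρ * x ^ (p / 2) ≤ ρ * ((1 + C) * K ^ 2) ^ (p / 2) := by gcongr
    _ = (1 + C) ^ (p / 2) * (ρ * K ^ p) := by
        rw [mul_rpow (by positivity) (by positivity), ← rpow_natCast, ← rpow_mul hK.le]
        ring_nf
    _ = (1 + C) ^ (p / 2) * N := by rw [hKp, mul_div_cancel₀ _ hρ.ne']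

/-- discrete moment estimate `ρ(T+|U|²)^{(q−3)/2} ≤ C_M N`. -/
theorem discrete_moment_estimate_two (q : ℝ) (hq : 5 < q) :
    ∃ C > 0, ∀ (Δv : ℝ), 0 < Δv → ∀ f : Idx3 → ℝ, (∀ j, 0 ≤ f j) →
      BddAbove (Set.range fun j : Idx3 => f j * (1 + enorm3 (gridV Δv j)) ^ q) →
      0 < (⨆ j : Idx3, f j * (1 + enorm3 (gridV Δv j)) ^ q) →
      0 < dRho Δv f →
      Δv ≤ ((π / (q - 5)) * (⨆ j : Idx3, f j * (1 + enorm3 (gridV Δv j)) ^ q) / dRho Δv f)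
            ^ (1 / (q - 3)) →
      dRho Δv f * (dT Δv f + enorm3 (dU Δv f) ^ 2) ^ ((q - 3) / 2)
        ≤ C * ⨆ j : Idx3, f j * (1 + enorm3 (gridV Δv j)) ^ q := by
  have hC := gridTailConst_pos (show 3 < q - 2 by linarith)
  refine ⟨(1 + gridTailConst (q - 2)) ^ ((q - 3) / 2), by positivity, ?_⟩
  intro Δv hΔv f hf hbdd hN hρ _
  have hfN := le_ciSup hbdd
  have h0 : Summable fun j => f j * Δv ^ 3 := by
    by_contra h
    simp [dRho, tsum_eq_zero_of_not_summable h] at hρ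
  have hpartial := fun K (hK : 0 < K) => sum_mul_sq_enorm3_gridV_le hq hΔv hK hf hfN h0
  have h2 : Summable fun j => f j * enorm3 (gridV Δv j) ^ 2 * Δv ^ 3 :=
    summable_of_sum_le (fun j => mul_nonneg (mul_nonneg (hf j) (sq_nonneg _)) (by positivity))
      (hpartial 1 one_pos)
  refine mul_rpow_le_of_forall_le hρ hN (by linarith)
    (add_nonneg (dT_nonneg hΔv.le hf) (sq_nonneg _)) hC.le fun K hK => ?_
  calc dRho Δv f * (dT Δv f + enorm3 (dU Δv f) ^ 2) ≤ dM2 Δv f :=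
        dRho_mul_dT_add_sq_enorm3_dU_le hΔv.le hf h0 h2 hρ
    _ ≤ _ := h2.tsum_le_of_sum_le (hpartial K hK)
    _ = _ := by rw [show 5 - q = 2 - (q - 3) by ring]

end
end

section
/- Let q ≥ 0, Δx, Δv, Δt > 0, and grid points x_i = iΔx, v_j = jΔv ∈ ℝ³. Let F : ℝ×ℝ³ → ℝ be twice continuously differentiable in its first variable with M₂ := sup_{x,v} |∂ₓ²F(x,v)|(1+|v|)^q < ∞, and set F̃(x,v) = F(x − v₁Δt, v). Let g : ℤ×ℤ³ → ℝ be any grid function and g̃ its reconstruction. Then sup_{i∈ℤ, j∈ℤ³} |g̃_{i,j} − F̃(x_i,v_j)|(1+|v_j|)^q ≤ sup_{i∈ℤ, j∈ℤ³} |g_{i,j} − F(x_i,v_j)|(1+|v_j|)^q + M₂·(Δx)². -/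
noncomputable section

open Real MeasureTheory

/-!
The reconstruction is the convex combination `θ g_{s+1,j} + (1 - θ) g_{s,j}` with
`θ = fract ((x_i - Δt v_{j,1}) / Δx)`, and the foot of the characteristic is `x_s + θ Δx`.
Comparing with the same combination of `F(x_{s+1}, v_j)` and `F(x_s, v_j)`, the grid errors
contribute at most their weighted supremum, and the error of linear interpolation of the
`C²` function `F(·, v_j)` is at most `sup |∂ₓ²F(·, v_j)| Δx²`; multiplying by the weight
`(1 + |v_j|)^q` gives the claim.
-/

section LinearInterpolation

variable {f : ℝ → ℝ} {C : ℝ}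

theorem abs_sub_sub_deriv_mul_le (hf : Differentiable ℝ f)
    (hf' : Differentiable ℝ (deriv f)) (hC : ∀ x, |deriv (deriv f) x| ≤ C) (a b : ℝ) :
    |f b - f a - deriv f a * (b - a)| ≤ C * (b - a) ^ 2 := by
  have hlip : ∀ x, |deriv f x - deriv f a| ≤ C * |x - a| := fun x => by
    simpa using convex_univ.norm_image_sub_le_of_norm_deriv_le (fun y _ => hf' y)
      (fun y _ => hC y) (Set.mem_univ a) (Set.mem_univ x)
  have hderiv : ∀ x, HasDerivAt (fun x => f x - deriv f a * x) (deriv f x - deriv f a) x := by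
    intro x
    have h := (hf x).hasDerivAt.sub ((hasDerivAt_id' x).const_mul (deriv f a))
    rwa [mul_one] at h
  have hC0 : 0 ≤ C := (abs_nonneg _).trans (hC a)
  have key := (convex_uIcc a b).norm_image_sub_le_of_norm_hasDerivWithin_le
    (fun x _ => (hderiv x).hasDerivWithinAt) (fun x hx => (hlip x).trans
      (mul_le_mul_of_nonneg_left (Set.abs_sub_left_of_mem_uIcc hx) hC0))
    Set.left_mem_uIcc Set.right_mem_uIcc
  calc |f b - f a - deriv f a * (b - a)|
      = |(f b - deriv f a * b) - (f a - deriv f a * a)| := by ring_nf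
    _ ≤ C * |b - a| * |b - a| := key
    _ = C * (b - a) ^ 2 := by rw [mul_assoc, ← abs_mul, abs_mul_self, sq]

theorem abs_lineInterp_sub_le (hf : Differentiable ℝ f)
    (hf' : Differentiable ℝ (deriv f)) (hC : ∀ x, |deriv (deriv f) x| ≤ C)
    {θ : ℝ} (hθ₀ : 0 ≤ θ) (hθ₁ : θ ≤ 1) (a h : ℝ) :
    |θ * f (a + h) + (1 - θ) * f a - f (a + θ * h)| ≤ C * h ^ 2 := by
  set y := a + θ * h
  have hR₁ := abs_sub_sub_deriv_mul_le hf hf' hC y (a + h)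
  have hR₂ := abs_sub_sub_deriv_mul_le hf hf' hC y a
  have hC0 : 0 ≤ C := (abs_nonneg _).trans (hC a)
  have h₁ : C * (a + h - y) ^ 2 ≤ C * h ^ 2 :=
    mul_le_mul_of_nonneg_left (by nlinarith) hC0
  have h₂ : C * (a - y) ^ 2 ≤ C * h ^ 2 :=
    mul_le_mul_of_nonneg_left (by nlinarith) hC0
  -- the first-order terms of the two Taylor expansions about `y` cancel
  calc |θ * f (a + h) + (1 - θ) * f a - f y|
      = |θ * (f (a + h) - f y - deriv f y * (a + h - y))
          + (1 - θ) * (f a - f y - deriv f y * (a - y))| := by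
        congr 1; simp only [y]; ring
    _ ≤ θ * (C * h ^ 2) + (1 - θ) * (C * h ^ 2) := by
      refine (abs_add_le _ _).trans (add_le_add ?_ ?_) <;>
        rw [abs_mul, abs_of_nonneg (by linarith)] <;> gcongr <;> linarith
    _ = C * h ^ 2 := by ring

theorem abs_lineInterp_sub_le_of_abs_sub_le {E : ℝ} (hf : Differentiable ℝ f)
    (hf' : Differentiable ℝ (deriv f)) (hC : ∀ x, |deriv (deriv f) x| ≤ C)
    {θ : ℝ} (hθ₀ : 0 ≤ θ) (hθ₁ : θ ≤ 1) {a h u w : ℝ}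
    (hu : |u - f (a + h)| ≤ E) (hw : |w - f a| ≤ E) :
    |θ * u + (1 - θ) * w - f (a + θ * h)| ≤ E + C * h ^ 2 := by
  have hinterp := abs_lineInterp_sub_le hf hf' hC hθ₀ hθ₁ a h
  calc |θ * u + (1 - θ) * w - f (a + θ * h)|
      = |θ * (u - f (a + h)) + (1 - θ) * (w - f a)
          + (θ * f (a + h) + (1 - θ) * f a - f (a + θ * h))| := by ring_nf
    _ ≤ θ * E + (1 - θ) * E + C * h ^ 2 := by
      refine (abs_add_le _ _).trans
        (add_le_add ((abs_add_le _ _).trans (add_le_add ?_ ?_)) hinterp) <;>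
        rw [abs_mul, abs_of_nonneg (by linarith)] <;> gcongr
    _ = E + C * h ^ 2 := by ring

end LinearInterpolation

theorem sub_floor_div_mul_div_eq_fract {Δx : ℝ} (hΔx : Δx ≠ 0) (y : ℝ) :
    (y - ⌊y / Δx⌋ * Δx) / Δx = Int.fract (y / Δx) := by
  rw [Int.fract, sub_div, mul_div_cancel_right₀ _ hΔx]

theorem recon_eq_fract (Δx Δt Δv : ℝ) (hΔx : Δx ≠ 0) (g : ℤ → Idx3 → ℝ) (i : ℤ) (j : Idx3) :
    recon Δx Δt Δv g i j =
      Int.fract (((i : ℝ) * Δx - Δt * ((j 0 : ℝ) * Δv)) / Δx) * g (sIdx Δx Δt Δv i j + 1) j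
        + (1 - Int.fract (((i : ℝ) * Δx - Δt * ((j 0 : ℝ) * Δv)) / Δx)) *
            g (sIdx Δx Δt Δv i j) j := by
  rw [recon, sIdx, sub_floor_div_mul_div_eq_fract hΔx, ← sub_floor_div_mul_div_eq_fract hΔx]
  congr 2
  field_simp
  ring

theorem reconstruction_consistency_general (q Δx Δv Δt : ℝ)
    (hΔx : 0 < Δx)
    (F : ℝ → V3 → ℝ) (hF : ∀ v : V3, ContDiff ℝ 2 (fun x => F x v))
    (M₂ : ℝ)
    (hM₂ : ∀ (x : ℝ) (v : V3),
      |iteratedDeriv 2 (fun y => F y v) x| * (1 + enorm3 v) ^ q ≤ M₂)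
    (g : ℤ → Idx3 → ℝ) (N : ℝ)
    (hN : ∀ (i : ℤ) (j : Idx3),
      |g i j - F ((i : ℝ) * Δx) (gridV Δv j)| * (1 + enorm3 (gridV Δv j)) ^ q ≤ N) :
    ∀ (i : ℤ) (j : Idx3),
      |recon Δx Δt Δv g i j - F ((i : ℝ) * Δx - gridV Δv j 0 * Δt) (gridV Δv j)|
          * (1 + enorm3 (gridV Δv j)) ^ q
        ≤ N + M₂ * Δx ^ 2 := by
  intro i j
  set v := gridV Δv j
  set w := (1 + enorm3 v) ^ q
  have hw : 0 < w :=
    Real.rpow_pos_of_pos (add_pos_of_pos_of_nonneg one_pos (Real.sqrt_nonneg _)) q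
  have hC : ∀ x, |deriv (deriv fun y => F y v) x| ≤ M₂ / w := fun x => by
    rw [le_div_iff₀ hw, ← iteratedDeriv_one (f := fun y => F y v), ← iteratedDeriv_succ]
    exact hM₂ x v
  have hgrid : ∀ k : ℤ, |g k j - F (k * Δx) v| ≤ N / w := fun k => (le_div_iff₀ hw).2 (hN k j)
  set y := (i : ℝ) * Δx - Δt * ((j 0 : ℝ) * Δv)
  have hfoot : (i : ℝ) * Δx - v 0 * Δt = sIdx Δx Δt Δv i j * Δx + Int.fract (y / Δx) * Δx := by
    rw [sIdx, ← add_mul, Int.floor_add_fract, div_mul_cancel₀ _ hΔx.ne']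
    simp only [v, gridV]
    ring
  have hf' : Differentiable ℝ (deriv fun y => F y v) := by
    simpa only [iteratedDeriv_one] using (hF v).differentiable_iteratedDeriv 1 (by norm_num)
  have key := abs_lineInterp_sub_le_of_abs_sub_le ((hF v).differentiable two_ne_zero) hf' hC
    (Int.fract_nonneg (y / Δx)) (Int.fract_lt_one (y / Δx)).le
    (by simpa [add_mul] using hgrid (sIdx Δx Δt Δv i j + 1)) (hgrid (sIdx Δx Δt Δv i j))
  rw [recon_eq_fract _ _ _ hΔx.ne', hfoot]
  calc _ ≤ (N / w + M₂ / w * Δx ^ 2) * w := mul_le_mul_of_nonneg_right key hw.le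
    _ = N + M₂ * Δx ^ 2 := by field_simp

/-- the reconstruction of a grid function approximates the shifted smooth
function with an extra `M₂(Δx)²` error in the weighted `L∞_q` norm. -/
theorem reconstruction_consistency (q Δx Δv Δt : ℝ) (hq : 0 ≤ q)
    (hΔx : 0 < Δx) (hΔv : 0 < Δv) (hΔt : 0 < Δt)
    (F : ℝ → V3 → ℝ) (hF : ∀ v : V3, ContDiff ℝ 2 (fun x => F x v))
    (M₂ : ℝ)
    (hM₂ : ∀ (x : ℝ) (v : V3),
      |iteratedDeriv 2 (fun y => F y v) x| * (1 + enorm3 v) ^ q ≤ M₂)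
    (g : ℤ → Idx3 → ℝ) (N : ℝ)
    (hN : ∀ (i : ℤ) (j : Idx3),
      |g i j - F ((i : ℝ) * Δx) (gridV Δv j)| * (1 + enorm3 (gridV Δv j)) ^ q ≤ N) :
    ∀ (i : ℤ) (j : Idx3),
      |recon Δx Δt Δv g i j - F ((i : ℝ) * Δx - gridV Δv j 0 * Δt) (gridV Δv j)|
          * (1 + enorm3 (gridV Δv j)) ^ q
        ≤ N + M₂ * Δx ^ 2 :=
  reconstruction_consistency_general q Δx Δv Δt hΔx F hF M₂ hM₂ g N hN

end
end
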